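/- arXiv:2503.22490 — 7 statements merged into one kernel-verified Lean document; each statement's English description precedes it below -/
import Mathlib

section
/- Let τ be a topology on a finite set X and x, y ∈ X with m(x) ⊊ m(y). Then x ∉ ℓ(y) and m(x) ⊆ m(ℓ(y)), where m(S) denotes the smallest open set containing the set S. -/
open Set

variable {X : Type*}

/-- The minimal open set of `τ` containing a point `x`. -/
def minOpen (τ : TopologicalSpace X) (x : X) : Set X :=
  ⋂₀ {U : Set X | τ.IsOpen U ∧ x ∈ U}

/-- The minimal open set of `τ` containing a set `S`. -/
def minOpenS (τ : TopologicalSpace X) (S : Set X) : Set X :=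
  ⋂₀ {U : Set X | τ.IsOpen U ∧ S ⊆ U}

/-- `ell τ x = X \ ⋃ {U ∈ τ : x ∉ U}`. -/
def ell (τ : TopologicalSpace X) (x : X) : Set X :=
  (⋃₀ {U : Set X | τ.IsOpen U ∧ x ∉ U})ᶜ

theorem ssubset_minOpen_not_mem_ell [Fintype X] (τ : TopologicalSpace X) (x y : X)
    (h : minOpen τ x ⊂ minOpen τ y) :
    x ∉ ell τ y ∧ minOpen τ x ⊆ minOpenS τ (ell τ y) := by
  have hxmem : x ∈ minOpen τ x := fun U hU => hU.2
  have hopen : τ.IsOpen (minOpen τ x) := by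
    apply Set.Finite.isOpen_sInter (Set.toFinite _)
    intro U hU; exact hU.1
  have hy : y ∉ minOpen τ x := by
    intro hy
    exact h.2 (fun U hU => Set.sInter_subset_of_mem (show minOpen τ x ∈ {V | τ.IsOpen V ∧ y ∈ V} from ⟨hopen, hy⟩) hU)
  constructor
  · intro hx
    exact hx (Set.mem_sUnion.2 ⟨minOpen τ x, ⟨hopen, hy⟩, hxmem⟩)
  · intro z hz
    refine Set.mem_sInter.2 fun U hU => ?_
    have hyell : y ∈ ell τ y := by
      intro hy
      obtain ⟨V, hV, hyV⟩ := hy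
      exact hV.2 hyV
    have hyU : y ∈ U := hU.2 hyell
    exact Set.sInter_subset_of_mem (show U ∈ {V | τ.IsOpen V ∧ y ∈ V} from ⟨hU.1, hyU⟩) (h.1 hz)
end

section
/- Let τ be a topology on a finite set X and x, y, z ∈ X with x ∈ m(z) and y ∈ m(z). Then m(ℓ(x)) ∩ m(y) ≠ ∅ and m(x) ∩ m(ℓ(y)) ≠ ∅. -/
open Set

variable {X : Type*}

theorem mem_minOpen_pair [Fintype X] (τ : TopologicalSpace X) (x y z : X)
    (hx : x ∈ minOpen τ z) (hy : y ∈ minOpen τ z) :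
    (minOpenS τ (ell τ x) ∩ minOpen τ y).Nonempty ∧
    (minOpen τ x ∩ minOpenS τ (ell τ y)).Nonempty := by
  have key : ∀ a b : X, a ∈ minOpen τ b → b ∈ ell τ a := by
    intro a b hab hmem
    obtain ⟨U, ⟨hUo, haU⟩, hbU⟩ := hmem
    exact haU (hab U ⟨hUo, hbU⟩)
  have hzx : z ∈ ell τ x := key x z hx
  have hzy : z ∈ ell τ y := key y z hy
  constructor
  · refine ⟨y, ?_, fun U hU => hU.2⟩
    intro U hU
    exact hy U ⟨hU.1, hU.2 hzx⟩
  · refine ⟨x, fun U hU => hU.2, ?_⟩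
    intro U hU
    exact hx U ⟨hU.1, hU.2 hzy⟩
end

section
/- Let τ be a topology on a finite set X and x, y ∈ X. Then m(ℓ(x)) ∩ m(ℓ(y)) ≠ ∅ if and only if x and y are not T4-separated, where x, y are T4-separated if there exist closed sets J ∋ x, K ∋ y and disjoint open sets U_J ⊇ J, U_K ⊇ K. -/
open Set

variable {X : Type*}

theorem minOpenS_ell_inter_iff_not_T4_separated [Fintype X] (τ : TopologicalSpace X) (x y : X) :
    (minOpenS τ (ell τ x) ∩ minOpenS τ (ell τ y)).Nonempty ↔
      ¬ ∃ J K UJ UK : Set X,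
        τ.IsOpen Jᶜ ∧ τ.IsOpen Kᶜ ∧ x ∈ J ∧ y ∈ K ∧
        τ.IsOpen UJ ∧ τ.IsOpen UK ∧ J ⊆ UJ ∧ K ⊆ UK ∧ UJ ∩ UK = ∅ := by
  letI := τ
  have hmo : ∀ S : Set X, IsOpen (minOpenS τ S) := fun S =>
    Set.Finite.isOpen_sInter (Set.toFinite _) (fun U hU => hU.1)
  have hsub : ∀ (S U : Set X), IsOpen U → S ⊆ U → minOpenS τ S ⊆ U :=
    fun S U hU hSU => Set.sInter_subset_of_mem ⟨hU, hSU⟩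
  have hsupS : ∀ S : Set X, S ⊆ minOpenS τ S := fun S w hw =>
    Set.mem_sInter.mpr fun U hU => hU.2 hw
  have hellsub : ∀ (z : X) (J : Set X), IsOpen Jᶜ → z ∈ J → ell τ z ⊆ J := by
    intro z J hJ hz w hw
    by_contra h
    exact hw ⟨Jᶜ, ⟨hJ, fun hx => hx hz⟩, h⟩
  have hellclosed : ∀ z : X, IsOpen (ell τ z)ᶜ := by
    intro z
    rw [ell, compl_compl]
    exact isOpen_sUnion fun U hU => hU.1
  have hself : ∀ z : X, z ∈ ell τ z := by
    intro z h
    obtain ⟨U, ⟨hU, hx⟩, hz⟩ := h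
    exact hx hz
  constructor
  · rintro ⟨p, hpx, hpy⟩ ⟨J, K, UJ, UK, hJ, hK, hxJ, hyK, hUJ, hUK, hJUJ, hKUK, hdis⟩
    have : p ∈ UJ ∩ UK :=
      ⟨hsub _ _ hUJ ((hellsub x J hJ hxJ).trans hJUJ) hpx,
       hsub _ _ hUK ((hellsub y K hK hyK).trans hKUK) hpy⟩
    rw [hdis] at this
    exact this
  · intro h
    by_contra hne
    refine h ⟨ell τ x, ell τ y, minOpenS τ (ell τ x), minOpenS τ (ell τ y),
      hellclosed x, hellclosed y, hself x, hself y, hmo _, hmo _, hsupS _, hsupS _, ?_⟩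
    exact Set.not_nonempty_iff_eq_empty.mp hne
end

section
/- A finite simple graph G is isomorphic to G₀(τ) for some topology τ on V(G) if and only if G is a disjoint union of cliques (i.e., adjacency in G, together with equality, is transitive). -/
open Set

variable {X : Type*}

/-- The graph `G₀(τ)`: distinct points are adjacent iff their minimal open sets coincide. -/
def G0graph (τ : TopologicalSpace X) : SimpleGraph X :=
  SimpleGraph.fromRel (fun x y => minOpen τ x = minOpen τ y)

theorem G0_iff_disjoint_union_of_cliques {V : Type*} [Fintype V] (G : SimpleGraph V) :
    (∃ τ : TopologicalSpace V, Nonempty (G ≃g G0graph τ)) ↔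
      ∀ x y z : V, G.Adj x y → G.Adj y z → x ≠ z → G.Adj x z := by
  constructor
  · rintro ⟨τ, ⟨e⟩⟩ x y z hxy hyz hxz
    have h1 := e.map_adj_iff.mpr hxy
    have h2 := e.map_adj_iff.mpr hyz
    simp only [G0graph, SimpleGraph.fromRel_adj] at h1 h2
    have hm1 : minOpen τ (e x) = minOpen τ (e y) := by
      rcases h1.2 with h | h
      exacts [h, h.symm]
    have hm2 : minOpen τ (e y) = minOpen τ (e z) := by
      rcases h2.2 with h | h
      exacts [h, h.symm]
    have : (G0graph τ).Adj (e x) (e z) := by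
      simp only [G0graph, SimpleGraph.fromRel_adj]
      exact ⟨fun hh => hxz (e.injective hh), Or.inl (hm1.trans hm2)⟩
    exact e.map_adj_iff.mp this
  · intro h
    classical
    set r : V → V → Prop := fun a b => a = b ∨ G.Adj a b with hr
    have hr_symm : ∀ a b, r a b → r b a := by
      rintro a b (rfl | h')
      exacts [Or.inl rfl, Or.inr h'.symm]
    have hr_trans : ∀ a b c, r a b → r b c → r a c := by
      rintro a b c (rfl | hab) (rfl | hbc)
      · exact Or.inl rfl
      · exact Or.inr hbc
      · exact Or.inr hab
      · by_cases hac : a = c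
        · exact Or.inl hac
        · exact Or.inr (h a b c hab hbc hac)
    refine ⟨{ IsOpen := fun S => ∀ a ∈ S, ∀ b, r a b → b ∈ S
              isOpen_univ := fun _ _ _ _ => trivial
              isOpen_inter := fun S T hS hT a ha b hab =>
                ⟨hS a ha.1 b hab, hT a ha.2 b hab⟩
              isOpen_sUnion := fun 𝒮 h𝒮 a ha b hab => by
                obtain ⟨S, hS, haS⟩ := ha
                exact ⟨S, hS, h𝒮 S hS a haS b hab⟩ }, ⟨?_⟩⟩
    set τ : TopologicalSpace V :=
      { IsOpen := fun S => ∀ a ∈ S, ∀ b, r a b → b ∈ S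
        isOpen_univ := fun _ _ _ _ => trivial
        isOpen_inter := fun S T hS hT a ha b hab =>
          ⟨hS a ha.1 b hab, hT a ha.2 b hab⟩
        isOpen_sUnion := fun 𝒮 h𝒮 a ha b hab => by
          obtain ⟨S, hS, haS⟩ := ha
          exact ⟨S, hS, h𝒮 S hS a haS b hab⟩ } with hτ
    have hclass_open : ∀ x : V, τ.IsOpen {b | r x b} := by
      intro x a ha b hab
      exact hr_trans x a b ha hab
    have hmin : ∀ x : V, minOpen τ x = {b | r x b} := by
      intro x
      apply subset_antisymm
      · exact sInter_subset_of_mem ⟨hclass_open x, Or.inl rfl⟩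
      · intro b hb
        rw [minOpen, mem_sInter]
        rintro U ⟨hU, hxU⟩
        exact hU x hxU b hb
    have key : ∀ a b : V, r a b ↔ minOpen τ a = minOpen τ b := by
      intro a b
      constructor
      · intro hab
        rw [hmin, hmin]
        ext c
        exact ⟨fun hc => hr_trans b a c (hr_symm a b hab) hc,
               fun hc => hr_trans a b c hab hc⟩
      · intro hab
        rw [hmin, hmin] at hab
        have : b ∈ {c | r a c} := by rw [hab]; exact Or.inl rfl
        exact this
    refine ⟨Equiv.refl V, ?_⟩
    intro a b
    simp only [Equiv.refl_apply, G0graph, SimpleGraph.fromRel_adj]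
    constructor
    · rintro ⟨hab, hm | hm⟩
      · rcases (key a b).2 hm with rfl | hadj
        · exact absurd rfl hab
        · exact hadj
      · rcases (key b a).2 hm with rfl | hadj
        · exact absurd rfl hab
        · exact hadj.symm
    · intro hab
      exact ⟨G.ne_of_adj hab, Or.inl ((key a b).1 (Or.inr hab))⟩
end

section
/- Let τ be a topology on a finite set X, and let H = G₁(τ) be the graph on X with x ~ y iff x ≠ y and (m(x) ⊆ m(y) or m(y) ⊆ m(x)). If x, y ∈ X are distinct and m(ℓ(x)) ∩ m(ℓ(y)) ≠ ∅, then the distance between x and y in H is at most 4. -/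
open Set

variable {X : Type*}

/-- The graph `G₁(τ)`: distinct points are adjacent iff their minimal open sets are comparable. -/
def G1graph (τ : TopologicalSpace X) : SimpleGraph X :=
  SimpleGraph.fromRel (fun x y => minOpen τ x ⊆ minOpen τ y)

lemma mem_minOpen_self (τ : TopologicalSpace X) (x : X) : x ∈ minOpen τ x :=
  fun _ hU => hU.2

lemma minOpen_subset (τ : TopologicalSpace X) {x : X} {U : Set X}
    (hU : τ.IsOpen U) (hx : x ∈ U) : minOpen τ x ⊆ U :=
  Set.sInter_subset_of_mem ⟨hU, hx⟩

lemma isOpen_minOpen [Finite X] (τ : TopologicalSpace X) (x : X) :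
    τ.IsOpen (minOpen τ x) := by
  letI := τ
  exact Set.Finite.isOpen_sInter (Set.toFinite _) (fun U hU => hU.1)

lemma exists_mid [Finite X] (τ : TopologicalSpace X) (x z : X)
    (hz : z ∈ minOpenS τ (ell τ x)) :
    ∃ w, minOpen τ z ⊆ minOpen τ w ∧ minOpen τ x ⊆ minOpen τ w := by
  letI := τ
  have hU : IsOpen (⋃ w ∈ ell τ x, minOpen τ w) :=
    isOpen_biUnion (fun w _ => isOpen_minOpen τ w)
  have hsub : ell τ x ⊆ ⋃ w ∈ ell τ x, minOpen τ w := fun w hw =>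
    Set.mem_biUnion hw (mem_minOpen_self τ w)
  have hz' : z ∈ ⋃ w ∈ ell τ x, minOpen τ w :=
    Set.sInter_subset_of_mem (⟨hU, hsub⟩ : _ ∈ {U : Set X | τ.IsOpen U ∧ ell τ x ⊆ U}) hz
  obtain ⟨w, hw, hzw⟩ := Set.mem_iUnion₂.mp hz'
  have hxw : x ∈ minOpen τ w := by
    by_contra hx
    exact hw ⟨minOpen τ w, ⟨isOpen_minOpen τ w, hx⟩, mem_minOpen_self τ w⟩
  exact ⟨w, minOpen_subset τ (isOpen_minOpen τ w) hzw,
    minOpen_subset τ (isOpen_minOpen τ w) hxw⟩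

lemma short_walk (τ : TopologicalSpace X) (a b : X)
    (h : minOpen τ a ⊆ minOpen τ b ∨ minOpen τ b ⊆ minOpen τ a) :
    ∃ p : (G1graph τ).Walk a b, p.length ≤ 1 := by
  by_cases hab : a = b
  · subst hab; exact ⟨SimpleGraph.Walk.nil, by norm_num [SimpleGraph.Walk.length_nil]⟩
  · refine ⟨SimpleGraph.Walk.cons ?_ SimpleGraph.Walk.nil, by rw [SimpleGraph.Walk.length_cons, SimpleGraph.Walk.length_nil]⟩
    rw [G1graph, SimpleGraph.fromRel_adj]
    exact ⟨hab, h⟩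

theorem T4_adjacent_dist_le_four [Fintype X] (τ : TopologicalSpace X) (x y : X)
    (hxy : x ≠ y) (h : (minOpenS τ (ell τ x) ∩ minOpenS τ (ell τ y)).Nonempty) :
    ∃ p : (G1graph τ).Walk x y, p.length ≤ 4 := by
  obtain ⟨z, hzx, hzy⟩ := h
  obtain ⟨w, hzw, hxw⟩ := exists_mid τ x z hzx
  obtain ⟨w', hzw', hyw'⟩ := exists_mid τ y z hzy
  obtain ⟨p1, hp1⟩ := short_walk τ x w (Or.inl hxw)
  obtain ⟨p2, hp2⟩ := short_walk τ w z (Or.inr hzw)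
  obtain ⟨p3, hp3⟩ := short_walk τ z w' (Or.inl hzw')
  obtain ⟨p4, hp4⟩ := short_walk τ w' y (Or.inr hyw')
  refine ⟨p1.append (p2.append (p3.append p4)), ?_⟩
  simp only [SimpleGraph.Walk.length_append]
  omega
end

section
/- Let τ be a topology on a finite set X with |X| ≥ 2, and suppose the graph G₃(τ) — with x ~ y iff x ≠ y, m(ℓ(x)) ∩ m(y) ≠ ∅, and m(x) ∩ m(ℓ(y)) ≠ ∅ — is connected. Then the graph G₂(τ), with x ~ y iff x ≠ y and m(x) ∩ m(y) ≠ ∅, is also connected. -/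
open Set

variable {X : Type*}

/-- The graph `G₂(τ)`. -/
def G2graph (τ : TopologicalSpace X) : SimpleGraph X :=
  SimpleGraph.fromRel (fun x y => (minOpen τ x ∩ minOpen τ y).Nonempty)

/-- The graph `G₃'(τ)`. -/
def G3graph (τ : TopologicalSpace X) : SimpleGraph X :=
  SimpleGraph.fromRel (fun x y =>
    (minOpenS τ (ell τ x) ∩ minOpen τ y).Nonempty ∧
    (minOpen τ x ∩ minOpenS τ (ell τ y)).Nonempty)

lemma minOpen_isOpen [Fintype X] (τ : TopologicalSpace X) (x : X) :
    τ.IsOpen (minOpen τ x) := by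
  letI := τ
  exact Set.Finite.isOpen_sInter (Set.toFinite _) (fun U hU => hU.1)

lemma minOpenS_subset_iUnion [Fintype X] (τ : TopologicalSpace X) (S : Set X) :
    minOpenS τ S ⊆ ⋃ w ∈ S, minOpen τ w := by
  letI := τ
  intro z hz
  exact hz _ ⟨isOpen_biUnion (fun w _ => minOpen_isOpen τ w),
    fun w hw => Set.mem_biUnion hw (mem_minOpen_self τ w)⟩

lemma mem_minOpen_of_mem_ell (τ : TopologicalSpace X) {x w : X} (hw : w ∈ ell τ x) :
    x ∈ minOpen τ w := by
  intro U hU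
  by_contra hx
  exact hw ⟨U, ⟨hU.1, hx⟩, hU.2⟩

lemma G2_reachable_of_minOpen_inter (τ : TopologicalSpace X) {x y : X}
    (hne : (minOpen τ x ∩ minOpen τ y).Nonempty) : (G2graph τ).Reachable x y := by
  rcases eq_or_ne x y with rfl | hxy
  · exact SimpleGraph.Reachable.refl x
  · exact SimpleGraph.Adj.reachable (by
      simp only [G2graph, SimpleGraph.fromRel_adj]
      exact ⟨hxy, Or.inl hne⟩)

lemma G3_adj_to_G2_reachable [Fintype X] (τ : TopologicalSpace X) {x y : X}
    (hadj : (G3graph τ).Adj x y) : (G2graph τ).Reachable x y := by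
  simp only [G3graph, SimpleGraph.fromRel_adj] at hadj
  obtain ⟨hxy, hrel⟩ := hadj
  have key : (minOpenS τ (ell τ x) ∩ minOpen τ y).Nonempty := by
    rcases hrel with ⟨h1, _⟩ | ⟨_, h2⟩
    · exact h1
    · exact Set.inter_comm _ _ ▸ h2
  obtain ⟨z, hz1, hz2⟩ := key
  obtain ⟨w, hw, hzw⟩ := Set.mem_iUnion₂.mp (minOpenS_subset_iUnion τ (ell τ x) hz1)
  have hxw : (G2graph τ).Reachable x w :=
    G2_reachable_of_minOpen_inter τ
      ⟨x, mem_minOpen_self τ x, mem_minOpen_of_mem_ell τ hw⟩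
  have hwy : (G2graph τ).Reachable w y :=
    G2_reachable_of_minOpen_inter τ ⟨z, hzw, hz2⟩
  exact hxw.trans hwy

theorem G3_connected_implies_G2_connected [Fintype X] (τ : TopologicalSpace X)
    (hcard : 2 ≤ Fintype.card X) (h : (G3graph τ).Connected) :
    (G2graph τ).Connected := by
  have hne : Nonempty X := h.nonempty
  have hpre : (G2graph τ).Preconnected := by
    intro x y
    obtain ⟨p⟩ := h.preconnected x y
    induction p with
    | nil => exact SimpleGraph.Reachable.refl _
    | cons hadj _ ih => exact (G3_adj_to_G2_reachable τ hadj).trans ih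
  exact ⟨hpre⟩
end

section
/- Let τ be a topology on a finite set X with three distinct points x, y, z such that m(x) ∩ m(y) = ∅, m(x) ∩ m(z) ≠ ∅ and m(y) ∩ m(z) ≠ ∅. Then there exist x' ∈ m(x) ∩ m(z) and y' ∈ m(y) ∩ m(z) such that x', y', z are pairwise distinct or equal and pairwise satisfy: for each pair (a,b) among {x', y', z}, m(ℓ(a)) ∩ m(b) ≠ ∅. In particular, the graph G₃''(τ) (with a ~ b iff a ≠ b and m(ℓ(a)') ∩ m(b) ≠ ∅ or m(a) ∩ m(ℓ(b)) ≠ ∅) contains a triangle. -/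
open Set

variable {X : Type*}

/-- The graph `G₃''(τ)`: distinct points `a, b` are adjacent iff
`m(ℓ(a)) ∩ m(b) ≠ ∅` or `m(a) ∩ m(ℓ(b)) ≠ ∅`. -/
def G3dgraph (τ : TopologicalSpace X) : SimpleGraph X :=
  SimpleGraph.fromRel (fun a b => (minOpenS τ (ell τ a) ∩ minOpen τ b).Nonempty)

lemma minOpen_subset_of_mem {τ : TopologicalSpace X} {x w : X}
    (h : w ∈ minOpen τ x) : minOpen τ w ⊆ minOpen τ x := by
  intro u hu U hU
  exact hu U ⟨hU.1, h U hU⟩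

lemma mem_ell_of_mem_minOpen {τ : TopologicalSpace X} {a w : X}
    (h : a ∈ minOpen τ w) : w ∈ ell τ a := by
  intro hw
  obtain ⟨U, ⟨hUo, haU⟩, hwU⟩ := hw
  exact haU (h U ⟨hUo, hwU⟩)

lemma minOpen_subset_minOpenS {τ : TopologicalSpace X} {S : Set X} {w : X}
    (h : w ∈ S) : minOpen τ w ⊆ minOpenS τ S := by
  intro u hu U hU
  exact hu U ⟨hU.1, hU.2 h⟩

theorem G3d_contains_triangle [Fintype X] (τ : TopologicalSpace X) (x y z : X)
    (hxy : x ≠ y) (hxz : x ≠ z) (hyz : y ≠ z)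
    (hdisj : minOpen τ x ∩ minOpen τ y = ∅)
    (hxz' : (minOpen τ x ∩ minOpen τ z).Nonempty)
    (hyz' : (minOpen τ y ∩ minOpen τ z).Nonempty) :
    ∃ x' ∈ minOpen τ x ∩ minOpen τ z, ∃ y' ∈ minOpen τ y ∩ minOpen τ z,
      (∀ a ∈ ({x', y', z} : Set X), ∀ b ∈ ({x', y', z} : Set X),
        (minOpenS τ (ell τ a) ∩ minOpen τ b).Nonempty) ∧
      x' ≠ y' ∧ x' ≠ z ∧ y' ≠ z ∧
      (G3dgraph τ).Adj x' y' ∧ (G3dgraph τ).Adj x' z ∧ (G3dgraph τ).Adj y' z := by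
  obtain ⟨x', hx'x, hx'z⟩ := hxz'
  obtain ⟨y', hy'y, hy'z⟩ := hyz'
  -- each of x', y', z lies in m(z)
  have hzz : z ∈ minOpen τ z := mem_minOpen_self τ z
  have hmemz : ∀ b ∈ ({x', y', z} : Set X), b ∈ minOpen τ z := by
    intro b hb
    rcases hb with rfl | rfl | rfl <;> assumption
  -- key: for a ∈ {x',y',z}, m(z) ⊆ m(ℓ(a))
  have hkey : ∀ a ∈ ({x', y', z} : Set X), minOpen τ z ⊆ minOpenS τ (ell τ a) := by
    intro a ha
    exact minOpen_subset_minOpenS (mem_ell_of_mem_minOpen (hmemz a ha))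
  have hpairs : ∀ a ∈ ({x', y', z} : Set X), ∀ b ∈ ({x', y', z} : Set X),
      (minOpenS τ (ell τ a) ∩ minOpen τ b).Nonempty := by
    intro a ha b hb
    refine ⟨b, hkey a ha (hmemz b hb), mem_minOpen_self τ b⟩
  -- distinctness
  have hx'y' : x' ≠ y' := by
    intro h
    exact absurd hdisj (Set.nonempty_iff_ne_empty.mp ⟨x', hx'x, h ▸ hy'y⟩)
  have hx'ne : x' ≠ z := by
    intro h
    have hz : z ∈ minOpen τ x := h ▸ hx'x
    have : minOpen τ z ⊆ minOpen τ x := minOpen_subset_of_mem hz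
    exact absurd hdisj (Set.nonempty_iff_ne_empty.mp ⟨y', this hy'z, hy'y⟩)
  have hy'ne : y' ≠ z := by
    intro h
    have hz : z ∈ minOpen τ y := h ▸ hy'y
    have : minOpen τ z ⊆ minOpen τ y := minOpen_subset_of_mem hz
    exact absurd hdisj (Set.nonempty_iff_ne_empty.mp ⟨x', hx'x, this hx'z⟩)
  have hmx' : x' ∈ ({x', y', z} : Set X) := by left; rfl
  have hmy' : y' ∈ ({x', y', z} : Set X) := by right; left; rfl
  have hmz : z ∈ ({x', y', z} : Set X) := by right; right; rfl
  refine ⟨x', ⟨hx'x, hx'z⟩, y', ⟨hy'y, hy'z⟩, hpairs, hx'y', hx'ne, hy'ne,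
    ⟨hx'y', Or.inl (hpairs x' hmx' y' hmy')⟩,
    ⟨hx'ne, Or.inl (hpairs x' hmx' z hmz)⟩,
    ⟨hy'ne, Or.inl (hpairs y' hmy' z hmz)⟩⟩
end
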